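/- arXiv:2206.02694 — 8 statements merged into one kernel-verified Lean document; each statement's English description precedes it below -/
import Mathlib

section
/- The closed conical hull of C × {1} in X × ℝ equals the disjoint union of cone(C × {1}) and rec(C) × {0}. -/
open scoped Pointwise
open Filter Topology

/-!
A point `(x, t)` lies in `cone (C × {1})` iff `t > 0` and `t⁻¹ • x ∈ C`. For a limit `(x, t)` of
points `(xₙ, tₙ) = tₙ • (cₙ, 1)` with `t > 0` this description passes to the limit because `C` is
closed. If `t = 0`, then for `c₀ ∈ C` the convex combinations `(1 - tₙ) • c₀ + tₙ • cₙ` stay in `C`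
and tend to `c₀ + x`, so `x ∈ rec C`. Conversely, for `v ∈ rec C` and `c₀ ∈ C` the points
`(n + 1)⁻¹ • (c₀ + (n + 1) • v, 1)` of the cone tend to `(v, 0)`.
-/

namespace Set

section RecessionCone

variable {E : Type*} [AddCommMonoid E]

def recessionCone (C : Set E) : Set E :=
  {v | ∀ c ∈ C, v + c ∈ C}

theorem add_nsmul_mem_of_mem_recessionCone {C : Set E} {v c : E} (hv : v ∈ recessionCone C)
    (hc : c ∈ C) (n : ℕ) : c + n • v ∈ C := by
  induction n with
  | zero => simpa using hc
  | succ n ih => simpa [succ_nsmul, add_comm, add_left_comm, add_assoc] using hv _ ih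

end RecessionCone

variable {E : Type*} [AddCommGroup E] [Module ℝ E]

def homogenizationCone (C : Set E) : Set (E × ℝ) :=
  ⋃ ρ ∈ Ioi (0 : ℝ), ρ • (C ×ˢ ({1} : Set ℝ))

theorem mem_homogenizationCone_iff {C : Set E} {p : E × ℝ} :
    p ∈ homogenizationCone C ↔ 0 < p.2 ∧ p.2⁻¹ • p.1 ∈ C := by
  simp only [homogenizationCone, mem_iUnion, mem_smul_set, mem_prod, mem_Ioi,
    mem_singleton_iff, exists_prop]
  constructor
  · rintro ⟨ρ, hρ, ⟨c, r⟩, ⟨hc, rfl : r = 1⟩, rfl⟩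
    simpa [hρ, hρ.ne'] using hc
  · rintro ⟨hp, hc⟩
    exact ⟨p.2, hp, (p.2⁻¹ • p.1, 1), ⟨hc, rfl⟩, by simp [smul_inv_smul₀ hp.ne']⟩

theorem smul_mem_homogenizationCone {C : Set E} {ρ : ℝ} (hρ : 0 < ρ) {c : E} (hc : c ∈ C) :
    (ρ • c, ρ) ∈ homogenizationCone C :=
  mem_homogenizationCone_iff.2 ⟨hρ, by simpa [hρ.ne'] using hc⟩

theorem disjoint_homogenizationCone_prod_zero (C D : Set E) :
    Disjoint (homogenizationCone C) (D ×ˢ ({0} : Set ℝ)) := by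
  refine disjoint_left.2 fun p hK hD ↦ ?_
  exact (mem_homogenizationCone_iff.1 hK).1.ne' (mem_prod.1 hD).2

variable [TopologicalSpace E] [ContinuousSMul ℝ E]

theorem mem_of_tendsto_homogenizationCone {C : Set E} (hC : IsClosed C) {α : Type*}
    {l : Filter α} [l.NeBot] {f : α → E × ℝ} {p : E × ℝ} (hp : 0 < p.2)
    (hf : Tendsto f l (𝓝 p)) (hfC : ∀ᶠ a in l, f a ∈ homogenizationCone C) :
    p ∈ homogenizationCone C := by
  have hlim : Tendsto (fun a ↦ (f a).2⁻¹ • (f a).1) l (𝓝 (p.2⁻¹ • p.1)) :=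
    (hf.snd_nhds.inv₀ hp.ne').smul hf.fst_nhds
  exact mem_homogenizationCone_iff.2 ⟨hp, hC.mem_of_tendsto hlim <|
    hfC.mono fun a ha ↦ (mem_homogenizationCone_iff.1 ha).2⟩

variable [ContinuousAdd E]

theorem mem_recessionCone_of_tendsto_homogenizationCone {C : Set E} (hC : IsClosed C)
    (hconv : Convex ℝ C) {α : Type*} {l : Filter α} [l.NeBot] {f : α → E × ℝ} {v : E}
    (hf : Tendsto f l (𝓝 (v, 0))) (hfC : ∀ᶠ a in l, f a ∈ homogenizationCone C) :
    v ∈ recessionCone C := by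
  intro c₀ hc₀
  have hsnd : Tendsto (fun a ↦ (f a).2) l (𝓝 0) := hf.snd_nhds
  have hlim : Tendsto (fun a ↦ (1 - (f a).2) • c₀ + (f a).1) l (𝓝 (v + c₀)) := by
    simpa [add_comm] using
      (((tendsto_const_nhds (x := (1 : ℝ))).sub hsnd).smul (tendsto_const_nhds (x := c₀))).add
        hf.fst_nhds
  refine hC.mem_of_tendsto hlim ?_
  filter_upwards [hfC, hsnd.eventually (gt_mem_nhds one_pos)] with a ha hlt
  obtain ⟨hpos, hc⟩ := mem_homogenizationCone_iff.1 ha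
  -- `(f a).1 = (f a).2 • ((f a).2⁻¹ • (f a).1)`, a point of the segment from `c₀` into `C`
  have := hconv hc₀ hc (show (0 : ℝ) ≤ 1 - (f a).2 by linarith) hpos.le (by ring)
  rwa [smul_inv_smul₀ hpos.ne'] at this

theorem closure_homogenizationCone_subset {C : Set E} (hC : IsClosed C) (hconv : Convex ℝ C) :
    closure (homogenizationCone C) ⊆
      homogenizationCone C ∪ recessionCone C ×ˢ ({0} : Set ℝ) := by
  intro p hp
  have := mem_closure_iff_nhdsWithin_neBot.1 hp
  have hf : Tendsto id (𝓝[homogenizationCone C] p) (𝓝 p) :=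
    tendsto_nhdsWithin_of_tendsto_nhds tendsto_id
  have hfC : ∀ᶠ q in 𝓝[homogenizationCone C] p, q ∈ homogenizationCone C :=
    self_mem_nhdsWithin
  have hp₂ : 0 ≤ p.2 := ge_of_tendsto hf.snd_nhds
    (hfC.mono fun q hq ↦ (mem_homogenizationCone_iff.1 hq).1.le)
  rcases hp₂.lt_or_eq with hpos | hzero
  · exact Or.inl (mem_of_tendsto_homogenizationCone hC hpos hf hfC)
  · refine Or.inr ⟨?_, hzero.symm⟩
    have hf₀ : Tendsto id (𝓝[homogenizationCone C] p) (𝓝 (p.1, (0 : ℝ))) := by rwa [hzero]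
    exact mem_recessionCone_of_tendsto_homogenizationCone hC hconv hf₀ hfC

theorem mk_zero_mem_closure_homogenizationCone {C : Set E} {c₀ : E} (hc₀ : c₀ ∈ C) {v : E}
    (hv : v ∈ recessionCone C) : (v, (0 : ℝ)) ∈ closure (homogenizationCone C) := by
  have hinv : Tendsto (fun n : ℕ ↦ ((n : ℝ) + 1)⁻¹) atTop (𝓝 0) := by
    simpa [one_div] using tendsto_one_div_add_atTop_nhds_zero_nat (𝕜 := ℝ)
  refine mem_closure_of_tendsto (b := atTop)
    (f := fun n : ℕ ↦ (((n : ℝ) + 1)⁻¹ • c₀ + v, ((n : ℝ) + 1)⁻¹)) ?_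
    (Eventually.of_forall fun n ↦ ?_)
  · simpa using ((hinv.smul_const c₀).add_const v).prodMk_nhds hinv
  · have hn : (0 : ℝ) < n + 1 := by positivity
    have hc := add_nsmul_mem_of_mem_recessionCone hv hc₀ (n + 1)
    rw [← Nat.cast_smul_eq_nsmul ℝ, Nat.cast_succ] at hc
    convert smul_mem_homogenizationCone (inv_pos.2 hn) hc using 2
    rw [smul_add, inv_smul_smul₀ hn.ne']

theorem closure_homogenizationCone {C : Set E} (hC : IsClosed C) (hconv : Convex ℝ C)
    (hne : C.Nonempty) :
    closure (homogenizationCone C) =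
      homogenizationCone C ∪ recessionCone C ×ˢ ({0} : Set ℝ) := by
  refine (closure_homogenizationCone_subset hC hconv).antisymm (union_subset subset_closure ?_)
  rintro ⟨v, t⟩ ⟨hv, rfl : t = 0⟩
  exact mk_zero_mem_closure_homogenizationCone hne.some_mem hv

end Set

theorem clcone_homogenization_decomposition_general
    {X : Type*} [NormedAddCommGroup X] [InnerProductSpace ℝ X]
    (C : Set X) (hcl : IsClosed C) (hconv : Convex ℝ C) (h0 : (0 : X) ∈ C) :
    closure (⋃ ρ ∈ Set.Ioi (0 : ℝ), ρ • (C ×ˢ ({1} : Set ℝ))) =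
        (⋃ ρ ∈ Set.Ioi (0 : ℝ), ρ • (C ×ˢ ({1} : Set ℝ))) ∪
          ({v : X | ∀ c ∈ C, v + c ∈ C} ×ˢ ({0} : Set ℝ)) ∧
      Disjoint (⋃ ρ ∈ Set.Ioi (0 : ℝ), ρ • (C ×ˢ ({1} : Set ℝ)))
        ({v : X | ∀ c ∈ C, v + c ∈ C} ×ˢ ({0} : Set ℝ)) :=
  ⟨Set.closure_homogenizationCone hcl hconv ⟨0, h0⟩,
    Set.disjoint_homogenizationCone_prod_zero C _⟩

theorem clcone_homogenization_decomposition
    {X : Type*} [NormedAddCommGroup X] [InnerProductSpace ℝ X] [CompleteSpace X]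
    (C : Set X) (hcl : IsClosed C) (hconv : Convex ℝ C) (h0 : (0 : X) ∈ C) :
    closure (⋃ ρ ∈ Set.Ioi (0 : ℝ), ρ • (C ×ˢ ({1} : Set ℝ))) =
        (⋃ ρ ∈ Set.Ioi (0 : ℝ), ρ • (C ×ˢ ({1} : Set ℝ))) ∪
          ({v : X | ∀ c ∈ C, v + c ∈ C} ×ˢ ({0} : Set ℝ)) ∧
      Disjoint (⋃ ρ ∈ Set.Ioi (0 : ℝ), ρ • (C ×ˢ ({1} : Set ℝ)))
        ({v : X | ∀ c ∈ C, v + c ∈ C} ×ˢ ({0} : Set ℝ)) :=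
  clcone_homogenization_decomposition_general C hcl hconv h0
end

section
/- If C is linearly bounded, then clcone(C × {1}) = ⋃_{ρ ≥ 0} ρ(C × {1}). -/
open scoped Pointwise

theorem clcone_of_linearly_bounded
    {X : Type*} [NormedAddCommGroup X] [InnerProductSpace ℝ X] [CompleteSpace X]
    (C : Set X) (hcl : IsClosed C) (hconv : Convex ℝ C) (h0 : (0 : X) ∈ C)
    (hlb : ∀ d : X, Bornology.IsBounded (C ∩ {x : X | ∃ t : ℝ, 0 ≤ t ∧ x = t • d})) :
    closure (⋃ ρ ∈ Set.Ioi (0 : ℝ), ρ • (C ×ˢ ({1} : Set ℝ))) =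
      ⋃ ρ ∈ Set.Ici (0 : ℝ), ρ • (C ×ˢ ({1} : Set ℝ)) := by
  apply Set.Subset.antisymm
  · rintro ⟨x, t⟩ hp
    obtain ⟨f, hf, hlim⟩ := mem_closure_iff_seq_limit.1 hp
    have hmem : ∀ n, ∃ ρ : ℝ, ∃ c : X, 0 < ρ ∧ c ∈ C ∧ f n = (ρ • c, ρ) := by
      intro n
      have h := hf n
      simp only [Set.mem_iUnion, Set.mem_Ioi] at h
      obtain ⟨ρ, hρ, hm⟩ := h
      obtain ⟨q, hq, hqe⟩ := hm
      obtain ⟨hq1, hq2⟩ := hq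
      refine ⟨ρ, q.1, hρ, hq1, ?_⟩
      rw [← hqe]
      simp only [Set.mem_singleton_iff] at hq2
      ext <;> simp [hq2]
    choose ρ c hρpos hcC hfc using hmem
    have hρlim : Filter.Tendsto ρ Filter.atTop (nhds t) := by
      have : Filter.Tendsto (fun n => (f n).2) Filter.atTop (nhds t) :=
        (continuous_snd.tendsto _).comp hlim
      simpa [hfc] using this
    have hxlim : Filter.Tendsto (fun n => ρ n • c n) Filter.atTop (nhds x) := by
      have : Filter.Tendsto (fun n => (f n).1) Filter.atTop (nhds x) :=
        (continuous_fst.tendsto _).comp hlim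
      simpa [hfc] using this
    have htnn : 0 ≤ t := ge_of_tendsto hρlim (Filter.Eventually.of_forall fun n => (hρpos n).le)
    rcases htnn.lt_or_eq with htpos | ht0
    · -- t > 0
      have hclim : Filter.Tendsto (fun n => (ρ n)⁻¹ • (ρ n • c n)) Filter.atTop
          (nhds (t⁻¹ • x)) := by
        exact Filter.Tendsto.smul (hρlim.inv₀ htpos.ne') hxlim
      have hceq : ∀ n, (ρ n)⁻¹ • (ρ n • c n) = c n := by
        intro n; rw [smul_smul, inv_mul_cancel₀ (hρpos n).ne', one_smul]
      have hcmem : t⁻¹ • x ∈ C := by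
        apply hcl.mem_of_tendsto (by simpa [hceq] using hclim)
        exact Filter.Eventually.of_forall fun n => hcC n
      simp only [Set.mem_iUnion, Set.mem_Ici]
      refine ⟨t, htpos.le, (t⁻¹ • x, 1), ⟨hcmem, rfl⟩, ?_⟩
      ext
      · simp [smul_smul, mul_inv_cancel₀ htpos.ne']
      · simp
    · -- t = 0; show x = 0
      have hρ0 : Filter.Tendsto ρ Filter.atTop (nhds 0) := ht0 ▸ hρlim
      have hray : ∀ s : ℝ, 0 ≤ s → s • x ∈ C := by
        intro s hs
        rcases hs.lt_or_eq with hspos | hs0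
        · have hlim' : Filter.Tendsto (fun n => (s * ρ n) • c n) Filter.atTop
              (nhds (s • x)) := by
            have : (fun n => (s * ρ n) • c n) = fun n => s • (ρ n • c n) := by
              funext n; rw [mul_smul]
            rw [this]
            exact hxlim.const_smul s
          apply hcl.mem_of_tendsto hlim'
          have hev : ∀ᶠ n in Filter.atTop, s * ρ n ≤ 1 := by
            have : ∀ᶠ n in Filter.atTop, ρ n < s⁻¹ := by
              apply hρ0.eventually_lt_const
              positivity
            filter_upwards [this] with n hn
            calc s * ρ n ≤ s * s⁻¹ := by nlinarith [hρpos n]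
              _ = 1 := mul_inv_cancel₀ hspos.ne'
          filter_upwards [hev] with n hn
          exact hconv.smul_mem_of_zero_mem h0 (hcC n)
            ⟨(mul_pos hspos (hρpos n)).le, hn⟩
        · rw [← hs0, zero_smul]; exact h0
      have hx0 : x = 0 := by
        by_contra hx
        obtain ⟨R, hR⟩ := (hlb x).exists_norm_le
        have hxn : 0 < ‖x‖ := norm_pos_iff.2 hx
        set s : ℝ := (|R| + 1) / ‖x‖ with hsdef
        have hspos : 0 < s := by positivity
        have hmem' : s • x ∈ C ∩ {x' : X | ∃ t : ℝ, 0 ≤ t ∧ x' = t • x} :=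
          ⟨hray s hspos.le, s, hspos.le, rfl⟩
        have := hR _ hmem'
        rw [norm_smul, Real.norm_eq_abs, abs_of_pos hspos, hsdef,
          div_mul_cancel₀ _ hxn.ne'] at this
        have : |R| + 1 ≤ |R| := le_trans this (le_abs_self R)
        linarith
      simp only [Set.mem_iUnion, Set.mem_Ici]
      refine ⟨0, le_refl 0, (0, 1), ⟨h0, rfl⟩, ?_⟩
      ext <;> simp [hx0, ← ht0]
  · rintro ⟨x, t⟩ hp
    simp only [Set.mem_iUnion, Set.mem_Ici] at hp
    obtain ⟨r, hr, q, hq, hqe⟩ := hp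
    rcases hr.lt_or_eq with hrpos | hr0
    · apply subset_closure
      simp only [Set.mem_iUnion, Set.mem_Ioi]
      exact ⟨r, hrpos, q, hq, hqe⟩
    · -- r = 0, so point is (0,0)
      have hp0 : ((x, t) : X × ℝ) = 0 := by
        rw [← hqe, ← hr0]; simp
      rw [hp0]
      refine mem_closure_of_tendsto (f := fun n : ℕ => ((n : ℝ) + 1)⁻¹ • (((0 : X), (1 : ℝ)) : X × ℝ)) (b := (Filter.atTop : Filter ℕ)) ?_ ?_
      · have : Filter.Tendsto (fun n : ℕ => ((n : ℝ) + 1)⁻¹) Filter.atTop (nhds 0) :=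
          tendsto_one_div_add_atTop_nhds_zero_nat.congr (by intro n; rw [one_div])
        simpa using this.smul_const (((0 : X), (1 : ℝ)) : X × ℝ)
      · apply Filter.Eventually.of_forall
        intro n
        simp only [Set.mem_iUnion, Set.mem_Ioi]
        refine ⟨((n : ℝ) + 1)⁻¹, by positivity, ((0 : X), (1 : ℝ)), ⟨h0, rfl⟩, rfl⟩
end

section
/- The barrier cone of C equals the conical hull of the polar set: barc(C) = cone(C°). -/
open scoped Pointwise RealInnerProductSpace

theorem barrier_cone_eq_cone_polar
    {X : Type*} [NormedAddCommGroup X] [InnerProductSpace ℝ X] [CompleteSpace X]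
    (C : Set X) (hcl : IsClosed C) (hconv : Convex ℝ C) (h0 : (0 : X) ∈ C) :
    {x : X | BddAbove ((fun c : X => ⟪c, x⟫) '' C)} =
      ⋃ ρ ∈ Set.Ioi (0 : ℝ), ρ • {x : X | ∀ c ∈ C, ⟪c, x⟫ ≤ 1} := by
  ext x
  simp only [Set.mem_setOf_eq, Set.mem_iUnion, Set.mem_smul_set, Set.mem_Ioi]
  constructor
  · rintro ⟨M, hM⟩
    have h0' : (0 : ℝ) ≤ M := by
      have := hM (Set.mem_image_of_mem _ h0)
      simpa [inner_zero_left] using this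
    have hM1 : (0 : ℝ) < M + 1 := by linarith
    refine ⟨M + 1, hM1, (M + 1)⁻¹ • x, ?_, ?_⟩
    · intro c hc
      have h1 := hM (Set.mem_image_of_mem _ hc)
      rw [real_inner_smul_right]
      rw [inv_mul_le_iff₀ hM1, mul_one]
      linarith
    · rw [smul_smul, mul_inv_cancel₀ hM1.ne', one_smul]
  · rintro ⟨ρ, hρ, y, hy, rfl⟩
    refine ⟨ρ, ?_⟩
    rintro _ ⟨c, hc, rfl⟩
    simp only
    rw [real_inner_smul_right]
    nlinarith [hy c hc]
end

section
/- The polar cone of C equals the recession cone of the polar set of C: C^⊖ = rec(C°). -/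
open scoped RealInnerProductSpace

theorem polar_cone_eq_recession_of_polar
    {X : Type*} [NormedAddCommGroup X] [InnerProductSpace ℝ X] [CompleteSpace X]
    (C : Set X) (hcl : IsClosed C) (hconv : Convex ℝ C) (h0 : (0 : X) ∈ C) :
    {x : X | ∀ c ∈ C, ⟪c, x⟫ ≤ 0} =
      {x : X | ∀ y ∈ {y : X | ∀ c ∈ C, ⟪c, y⟫ ≤ 1}, x + y ∈ {y : X | ∀ c ∈ C, ⟪c, y⟫ ≤ 1}} := by
  ext x
  simp only [Set.mem_setOf_eq]
  constructor
  · intro hx y hy c hc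
    rw [inner_add_right]
    have := hx c hc
    have := hy c hc
    linarith
  · intro hx c hc
    have key : ∀ n : ℕ, ∀ c ∈ C, ⟪c, (n : ℝ) • x⟫ ≤ 1 := by
      intro n
      induction n with
      | zero => intro c hc; simp
      | succ n ih =>
        intro c hc
        have := hx _ ih c hc
        rw [inner_add_right] at this
        push_cast
        rw [add_smul, one_smul, inner_add_right, inner_smul_right] at *
        linarith
    by_contra h
    push_neg at h
    obtain ⟨n, hn⟩ := exists_nat_gt (1 / ⟪c, x⟫)
    have h1 := key n c hc
    rw [real_inner_smul_right] at h1
    have : (1 : ℝ) / ⟪c, x⟫ < n := hn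
    have : 1 < n * ⟪c, x⟫ := by
      rw [div_lt_iff₀ h] at this
      linarith
    linarith
end

section
/- The polar cone of the homogenization cone K = clcone(C × {1}) in X × ℝ equals the disjoint union cone(C° × {−1}) ∪ (C^⊖ × {0}), which equals clcone(C° × {−1}). -/
/-!
Testing the polar cone against the generators `(c, 1)` of `K` (a closed half-space condition
passes to the closure and to positive multiples) shows `(y, t) ∈ K^⊖` iff `⟪c, y⟫ + t ≤ 0` on `C`.
Since `0 ∈ C` this forces `t ≤ 0`: for `t < 0` rescaling by `-t` gives `cone(C° × {-1})`, and
`t = 0` gives `C^⊖ × {0}`. Each `(y, 0)` with `y ∈ C^⊖` is the limit of `ε • (ε⁻¹ • y, -1)` as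
`ε → 0⁺`, and `K^⊖` is closed, so `K^⊖ = clcone(C° × {-1})`.
-/

open scoped Pointwise RealInnerProductSpace Topology
open Set Filter

theorem mem_iUnion_smul_prod_singleton {R M N : Type*} [SMul R M] [SMul R N]
    (I : Set R) (S : Set M) (a : N) (k : M × N) :
    k ∈ ⋃ ρ ∈ I, ρ • (S ×ˢ ({a} : Set N)) ↔ ∃ ρ ∈ I, ∃ s ∈ S, k = (ρ • s, ρ • a) := by
  simp only [mem_iUnion₂, mem_smul_set, mem_prod, mem_singleton_iff, Prod.exists,
    Prod.smul_mk, exists_prop]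
  constructor
  · rintro ⟨ρ, hρ, s, _, ⟨hs, rfl⟩, rfl⟩
    exact ⟨ρ, hρ, s, hs, rfl⟩
  · rintro ⟨ρ, hρ, s, hs, rfl⟩
    exact ⟨ρ, hρ, s, a, ⟨hs, rfl⟩, rfl⟩

theorem disjoint_iUnion_smul_prod_neg_one_prod_zero {M : Type*} [SMul ℝ M] (S T : Set M) :
    Disjoint (⋃ ρ ∈ Ioi (0 : ℝ), ρ • (S ×ˢ ({-1} : Set ℝ))) (T ×ˢ ({0} : Set ℝ)) := by
  refine disjoint_left.2 fun k hk hkT => ?_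
  obtain ⟨ρ, hρ, s, -, rfl⟩ := (mem_iUnion_smul_prod_singleton _ _ _ _).1 hk
  have hρ0 : ρ * -1 = 0 := hkT.2
  linarith [mem_Ioi.1 hρ]

section InnerProductSpace

variable {X : Type*} [NormedAddCommGroup X] [InnerProductSpace ℝ X]

theorem isClosed_setOf_forall_inner_add_nonpos (C : Set X) :
    IsClosed {u : X × ℝ | ∀ c ∈ C, ⟪c, u.1⟫ + u.2 ≤ 0} := by
  simp only [ofPred_forall]
  exact isClosed_biInter fun c _ =>
    isClosed_le ((continuous_const.inner continuous_fst).add continuous_snd) continuous_const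

theorem polar_closure_cone_prod_one_eq (C : Set X) :
    {u : X × ℝ |
        ∀ k ∈ closure (⋃ ρ ∈ Ioi (0 : ℝ), ρ • (C ×ˢ ({1} : Set ℝ))),
          ⟪k.1, u.1⟫ + k.2 * u.2 ≤ 0} =
      {u : X × ℝ | ∀ c ∈ C, ⟪c, u.1⟫ + u.2 ≤ 0} := by
  ext u
  have hclosed : IsClosed {k : X × ℝ | ⟪k.1, u.1⟫ + k.2 * u.2 ≤ 0} :=
    isClosed_le ((continuous_fst.inner continuous_const).add
      (continuous_snd.mul continuous_const)) continuous_const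
  show closure _ ⊆ {k : X × ℝ | ⟪k.1, u.1⟫ + k.2 * u.2 ≤ 0} ↔ _
  rw [hclosed.closure_subset_iff]
  constructor
  · intro h c hc
    simpa using h ((mem_iUnion_smul_prod_singleton _ _ _ (c, 1)).2
      ⟨1, mem_Ioi.2 one_pos, c, hc, by simp⟩)
  · intro h k hk
    obtain ⟨ρ, hρ, c, hc, rfl⟩ := (mem_iUnion_smul_prod_singleton _ _ _ _).1 hk
    have hscaled := mul_nonpos_of_nonneg_of_nonpos (le_of_lt hρ) (h c hc)
    simp only [mem_ofPred_eq, real_inner_smul_left, smul_eq_mul, mul_one]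
    linarith

theorem setOf_forall_inner_add_nonpos_eq_union {C : Set X} (h0 : (0 : X) ∈ C) :
    {u : X × ℝ | ∀ c ∈ C, ⟪c, u.1⟫ + u.2 ≤ 0} =
      (⋃ ρ ∈ Ioi (0 : ℝ), ρ • ({y : X | ∀ c ∈ C, ⟪c, y⟫ ≤ 1} ×ˢ ({-1} : Set ℝ))) ∪
        ({y : X | ∀ c ∈ C, ⟪c, y⟫ ≤ 0} ×ˢ ({0} : Set ℝ)) := by
  ext ⟨y, t⟩
  simp only [mem_ofPred_eq, mem_union, mem_iUnion_smul_prod_singleton, mem_prod,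
    mem_singleton_iff, Prod.mk.injEq, smul_eq_mul, mul_neg_one]
  constructor
  · intro h
    have ht : t ≤ 0 := by simpa using h 0 h0
    rcases ht.lt_or_eq with ht | rfl
    · refine Or.inl ⟨-t, neg_pos.2 ht, (-t)⁻¹ • y, fun c hc => ?_, ?_, by ring⟩
      · rw [real_inner_smul_right, inv_mul_le_iff₀ (neg_pos.2 ht), mul_one]
        linarith [h c hc]
      · rw [smul_inv_smul₀ (neg_ne_zero.2 ht.ne)]
    · exact Or.inr ⟨fun c hc => by simpa using h c hc, rfl⟩
  · rintro (⟨ρ, hρ, z, hz, rfl, rfl⟩ | ⟨hy, rfl⟩) c hc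
    · have hscaled := mul_le_mul_of_nonneg_left (hz c hc) (le_of_lt hρ)
      rw [real_inner_smul_right]
      linarith
    · simpa using hy c hc

theorem polarCone_prod_zero_subset_closure (C : Set X) :
    {y : X | ∀ c ∈ C, ⟪c, y⟫ ≤ 0} ×ˢ ({0} : Set ℝ) ⊆
      closure (⋃ ρ ∈ Ioi (0 : ℝ), ρ • ({y : X | ∀ c ∈ C, ⟪c, y⟫ ≤ 1} ×ˢ ({-1} : Set ℝ))) := by
  rintro ⟨y, _⟩ ⟨hy, rfl⟩
  have hlim : Tendsto (fun ε : ℝ => ((y, -ε) : X × ℝ)) (𝓝[>] 0) (𝓝 (y, 0)) :=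
    ((continuous_const.prodMk continuous_neg).tendsto' 0 (y, 0) (by simp)).mono_left
      nhdsWithin_le_nhds
  refine mem_closure_of_tendsto hlim ?_
  filter_upwards [self_mem_nhdsWithin] with ε hε
  refine (mem_iUnion_smul_prod_singleton _ _ _ _).2 ⟨ε, hε, ε⁻¹ • y, fun c hc => ?_, ?_⟩
  · rw [real_inner_smul_right]
    nlinarith [hy c hc, inv_pos.2 (mem_Ioi.1 hε)]
  · simp [smul_inv_smul₀ (ne_of_gt (mem_Ioi.1 hε))]

end InnerProductSpace

theorem polar_cone_of_homogenization_general
    {X : Type*} [NormedAddCommGroup X] [InnerProductSpace ℝ X]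
    (C : Set X) (h0 : (0 : X) ∈ C) :
    {u : X × ℝ |
        ∀ k ∈ closure (⋃ ρ ∈ Set.Ioi (0 : ℝ), ρ • (C ×ˢ ({1} : Set ℝ))),
          ⟪k.1, u.1⟫ + k.2 * u.2 ≤ 0} =
        (⋃ ρ ∈ Set.Ioi (0 : ℝ),
            ρ • ({y : X | ∀ c ∈ C, ⟪c, y⟫ ≤ 1} ×ˢ ({-1} : Set ℝ))) ∪
          ({y : X | ∀ c ∈ C, ⟪c, y⟫ ≤ 0} ×ˢ ({0} : Set ℝ)) ∧
      Disjoint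
        (⋃ ρ ∈ Set.Ioi (0 : ℝ),
          ρ • ({y : X | ∀ c ∈ C, ⟪c, y⟫ ≤ 1} ×ˢ ({-1} : Set ℝ)))
        ({y : X | ∀ c ∈ C, ⟪c, y⟫ ≤ 0} ×ˢ ({0} : Set ℝ)) ∧
      {u : X × ℝ |
          ∀ k ∈ closure (⋃ ρ ∈ Set.Ioi (0 : ℝ), ρ • (C ×ˢ ({1} : Set ℝ))),
            ⟪k.1, u.1⟫ + k.2 * u.2 ≤ 0} =
        closure (⋃ ρ ∈ Set.Ioi (0 : ℝ),
          ρ • ({y : X | ∀ c ∈ C, ⟪c, y⟫ ≤ 1} ×ˢ ({-1} : Set ℝ))) := by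
  rw [polar_closure_cone_prod_one_eq]
  have hunion := setOf_forall_inner_add_nonpos_eq_union h0
  refine ⟨hunion, disjoint_iUnion_smul_prod_neg_one_prod_zero _ _, subset_antisymm ?_ ?_⟩
  · rw [hunion]
    exact union_subset subset_closure (polarCone_prod_zero_subset_closure C)
  · refine closure_minimal ?_ (isClosed_setOf_forall_inner_add_nonpos C)
    rw [hunion]
    exact subset_union_left

theorem polar_cone_of_homogenization
    {X : Type*} [NormedAddCommGroup X] [InnerProductSpace ℝ X] [CompleteSpace X]
    (C : Set X) (hcl : IsClosed C) (hconv : Convex ℝ C) (h0 : (0 : X) ∈ C) :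
    {u : X × ℝ |
        ∀ k ∈ closure (⋃ ρ ∈ Set.Ioi (0 : ℝ), ρ • (C ×ˢ ({1} : Set ℝ))),
          ⟪k.1, u.1⟫ + k.2 * u.2 ≤ 0} =
        (⋃ ρ ∈ Set.Ioi (0 : ℝ),
            ρ • ({y : X | ∀ c ∈ C, ⟪c, y⟫ ≤ 1} ×ˢ ({-1} : Set ℝ))) ∪
          ({y : X | ∀ c ∈ C, ⟪c, y⟫ ≤ 0} ×ˢ ({0} : Set ℝ)) ∧
      Disjoint
        (⋃ ρ ∈ Set.Ioi (0 : ℝ),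
          ρ • ({y : X | ∀ c ∈ C, ⟪c, y⟫ ≤ 1} ×ˢ ({-1} : Set ℝ)))
        ({y : X | ∀ c ∈ C, ⟪c, y⟫ ≤ 0} ×ˢ ({0} : Set ℝ)) ∧
      {u : X × ℝ |
          ∀ k ∈ closure (⋃ ρ ∈ Set.Ioi (0 : ℝ), ρ • (C ×ˢ ({1} : Set ℝ))),
            ⟪k.1, u.1⟫ + k.2 * u.2 ≤ 0} =
        closure (⋃ ρ ∈ Set.Ioi (0 : ℝ),
          ρ • ({y : X | ∀ c ∈ C, ⟪c, y⟫ ≤ 1} ×ˢ ({-1} : Set ℝ))) :=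
  polar_cone_of_homogenization_general C h0
end

section
/- Let D be the closed unit ball of X centered at 0 and let d ∈ X with ‖d‖ = 1. Then the polar set of C = D − d equals {y ∈ X : ‖P_E(y)‖² ≤ 1 + 2⟨d,y⟩}, where E = {d}^⊥ and P_E is the orthogonal projection onto E. -/
/-!
Translating the ball, `D - d` is the closed unit ball around `-d`, so `y` lies in its polar iff
`-⟪d, y⟫ + ‖y‖ ≤ 1`, the support function of `closedBall a r` being `y ↦ ⟪a, y⟫ + r ‖y‖`. By Pythagoras
`‖P_E y‖² = ‖y‖² - ⟪d, y⟫²`, and since `|⟪d, y⟫| ≤ ‖y‖` the condition `‖y‖ ≤ 1 + ⟪d, y⟫` is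
equivalent to its square `‖y‖² ≤ (1 + ⟪d, y⟫)²`.
-/

open scoped Pointwise RealInnerProductSpace

section

variable {X : Type*} [NormedAddCommGroup X] [InnerProductSpace ℝ X]

theorem forall_mem_closedBall_inner_le_iff {a y : X} {r b : ℝ} (hr : 0 ≤ r) :
    (∀ c ∈ Metric.closedBall a r, ⟪c, y⟫ ≤ b) ↔ ⟪a, y⟫ + r * ‖y‖ ≤ b := by
  constructor
  · intro h
    -- `‖y‖⁻¹ * ‖y‖ ^ 2 = ‖y‖` holds also for `y = 0`, so no case split is needed.
    have hmem : a + (r * ‖y‖⁻¹) • y ∈ Metric.closedBall a r := by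
      rw [mem_closedBall_iff_norm, add_sub_cancel_left, norm_smul,
        Real.norm_of_nonneg (by positivity), mul_assoc]
      exact mul_le_of_le_one_right hr (inv_mul_le_one_of_le₀ le_rfl (norm_nonneg y))
    have := h _ hmem
    rwa [inner_add_left, real_inner_smul_left, real_inner_self_eq_norm_sq, mul_assoc, pow_two,
      ← mul_assoc ‖y‖⁻¹, inv_mul_mul_self] at this
  · intro h c hc
    calc ⟪c, y⟫ = ⟪a, y⟫ + ⟪c - a, y⟫ := by rw [← inner_add_left, add_sub_cancel]
      _ ≤ ⟪a, y⟫ + ‖c - a‖ * ‖y‖ := by gcongr; exact real_inner_le_norm _ _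
      _ ≤ ⟪a, y⟫ + r * ‖y‖ := by gcongr; exact mem_closedBall_iff_norm.1 hc
      _ ≤ b := h

theorem norm_sq_orthogonalProjectionOnto_orthogonal_unit_singleton {d : X} (hd : ‖d‖ = 1)
    (y : X) : ‖((ℝ ∙ d)ᗮ.orthogonalProjectionOnto y : X)‖ ^ 2 = ‖y‖ ^ 2 - ⟪d, y⟫ ^ 2 := by
  rw [Submodule.coe_orthogonalProjectionOnto_apply,
    (ℝ ∙ d).norm_sq_eq_add_norm_sq_starProjection y, Submodule.starProjection_unit_singleton ℝ hd,
    norm_smul, hd, mul_one, Real.norm_eq_abs, sq_abs]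
  ring

end

theorem le_one_add_iff_sq_sub_sq_le {a t : ℝ} (ht : |t| ≤ a) :
    a ≤ 1 + t ↔ a ^ 2 - t ^ 2 ≤ 1 + 2 * t := by
  obtain ⟨ht₁, ht₂⟩ := abs_le.1 ht
  constructor <;> intro h <;> nlinarith

theorem polar_of_shifted_ball_general
    {X : Type*} [NormedAddCommGroup X] [InnerProductSpace ℝ X]
    (d : X) (hd : ‖d‖ = 1) :
    {y : X | ∀ c ∈ Metric.closedBall (0 : X) 1 + ({-d} : Set X), ⟪c, y⟫ ≤ 1} =
      {y : X |
        ‖(Submodule.orthogonalProjectionOnto ((Submodule.span ℝ ({d} : Set X))ᗮ) y : X)‖ ^ 2 ≤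
          1 + 2 * ⟪d, y⟫} := by
  ext y
  have hcs : |⟪d, y⟫| ≤ ‖y‖ := by simpa [hd] using abs_real_inner_le_norm d y
  rw [Set.mem_ofPred_eq, Set.mem_ofPred_eq, closedBall_add_singleton, zero_add,
    forall_mem_closedBall_inner_le_iff zero_le_one,
    norm_sq_orthogonalProjectionOnto_orthogonal_unit_singleton hd, inner_neg_left, one_mul,
    neg_add_le_iff_le_add, add_comm ⟪d, y⟫ 1]
  exact le_one_add_iff_sq_sub_sq_le hcs

theorem polar_of_shifted_ball
    {X : Type*} [NormedAddCommGroup X] [InnerProductSpace ℝ X] [CompleteSpace X]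
    (d : X) (hd : ‖d‖ = 1) :
    {y : X | ∀ c ∈ Metric.closedBall (0 : X) 1 + ({-d} : Set X), ⟪c, y⟫ ≤ 1} =
      {y : X |
        ‖(Submodule.orthogonalProjectionOnto ((Submodule.span ℝ ({d} : Set X))ᗮ) y : X)‖ ^ 2 ≤
          1 + 2 * ⟪d, y⟫} :=
  polar_of_shifted_ball_general d hd
end

section
/- Let K be the homogenization cone of the ball C = {x ∈ X : ‖x‖ ≤ γ} with γ > 0. Then for (y,s) ∈ X × ℝ: P_K(y,s) = (y,s) if ‖y‖ ≤ γs; P_K(y,s) = (0,0) if γ‖y‖ ≤ −s; and otherwise P_K(y,s) = ((s + γ‖y‖)/(1 + γ²))·(γy/‖y‖, 1). -/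
/-!
The closure of the cone over `C × {1}` is `K = {(x, t) | ‖x‖ ≤ γ t}`. Expanding the square shows
`‖y - k.1‖² + (s - k.2)² ≥ ‖y - q.1‖² + (s - q.2)² + ‖k - q‖²` for all `k ∈ K` as soon as
`q ∈ K` satisfies the variational inequality `⟪(y, s) - q, k - q⟫ ≤ 0` on `K`, so such a `q` is the
projection. In each case the candidate satisfies it by Cauchy–Schwarz: `⟪w, x⟫ ≤ γ ‖w‖ t` for
`(x, t) ∈ K`, i.e. `(w, -γ ‖w‖)` lies in the polar cone of `K`. In the third case
`(y, s) - q = c (y, -γ ‖y‖)` with `c ≥ 0`, and this vector is orthogonal to `q`.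
-/

open scoped Pointwise RealInnerProductSpace

open Set Filter Topology

section IceCreamCone

variable {X : Type*} [SeminormedAddCommGroup X]

def iceCreamCone (γ : ℝ) : Set (X × ℝ) := {z | ‖z.1‖ ≤ γ * z.2}

theorem isClosed_iceCreamCone (γ : ℝ) : IsClosed (iceCreamCone (X := X) γ) :=
  isClosed_le (by fun_prop) (by fun_prop)

theorem snd_nonneg_of_mem_iceCreamCone {γ : ℝ} (hγ : 0 < γ) {z : X × ℝ}
    (hz : z ∈ iceCreamCone γ) : 0 ≤ z.2 :=
  nonneg_of_mul_nonneg_right ((norm_nonneg _).trans hz) hγ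

theorem mem_smul_prod_one_iff [NormedSpace ℝ X] {γ ρ : ℝ} (hρ : 0 < ρ) {z : X × ℝ} :
    z ∈ ρ • ({x : X | ‖x‖ ≤ γ} ×ˢ ({1} : Set ℝ)) ↔ ‖z.1‖ ≤ γ * z.2 ∧ z.2 = ρ := by
  rw [mem_smul_set_iff_inv_smul_mem₀ hρ.ne', mem_prod, mem_ofPred_eq, Prod.smul_fst,
    Prod.smul_snd, norm_smul, norm_inv, Real.norm_of_nonneg hρ.le, inv_mul_le_iff₀ hρ,
    smul_eq_mul, mem_singleton_iff, inv_mul_eq_one₀ hρ.ne', mul_comm ρ γ]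
  exact ⟨fun ⟨hx, h⟩ => ⟨h ▸ hx, h.symm⟩, fun ⟨hx, h⟩ => ⟨h ▸ hx, h.symm⟩⟩

theorem iUnion_smul_prod_one_eq [NormedSpace ℝ X] (γ : ℝ) :
    ⋃ ρ ∈ Ioi (0 : ℝ), ρ • ({x : X | ‖x‖ ≤ γ} ×ˢ ({1} : Set ℝ)) =
      {z | ‖z.1‖ ≤ γ * z.2 ∧ 0 < z.2} := by
  ext z
  simp +contextual [mem_smul_prod_one_iff]

theorem closure_iUnion_smul_prod_one [NormedSpace ℝ X] {γ : ℝ} (hγ : 0 < γ) :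
    closure (⋃ ρ ∈ Ioi (0 : ℝ), ρ • ({x : X | ‖x‖ ≤ γ} ×ˢ ({1} : Set ℝ))) =
      iceCreamCone γ := by
  rw [iUnion_smul_prod_one_eq]
  refine (closure_minimal (fun z hz => hz.1) (isClosed_iceCreamCone γ)).antisymm fun z hz => ?_
  have hlim : Tendsto (fun ε : ℝ => z + (0, ε)) (𝓝[>] 0) (𝓝 z) := by
    have : Continuous fun ε : ℝ => z + ((0 : X), ε) := by fun_prop
    simpa [Prod.mk_zero_zero] using (this.tendsto 0).mono_left (nhdsWithin_le_nhds (s := Ioi 0))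
  refine mem_closure_of_tendsto hlim ?_
  filter_upwards [self_mem_nhdsWithin] with ε (hε : 0 < ε)
  have hz2 := snd_nonneg_of_mem_iceCreamCone hγ hz
  refine ⟨?_, ?_⟩
  · simp only [Prod.fst_add, Prod.snd_add, add_zero]
    nlinarith [show ‖z.1‖ ≤ γ * z.2 from hz]
  · simp only [Prod.snd_add]
    linarith

end IceCreamCone

section Projection

variable {X : Type*} [NormedAddCommGroup X] [InnerProductSpace ℝ X]

theorem inner_le_of_mem_iceCreamCone {γ : ℝ} {k : X × ℝ} (hk : k ∈ iceCreamCone γ) (w : X) :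
    ⟪w, k.1⟫ ≤ γ * ‖w‖ * k.2 :=
  calc ⟪w, k.1⟫ ≤ ‖w‖ * ‖k.1‖ := real_inner_le_norm w k.1
    _ ≤ ‖w‖ * (γ * k.2) := mul_le_mul_of_nonneg_left hk (norm_nonneg w)
    _ = γ * ‖w‖ * k.2 := by ring

theorem inner_add_mul_nonpos_of_mem_iceCreamCone {γ : ℝ} (hγ : 0 < γ) {y : X} {s : ℝ}
    (hsy : γ * ‖y‖ ≤ -s) {k : X × ℝ} (hk : k ∈ iceCreamCone γ) : ⟪y, k.1⟫ + s * k.2 ≤ 0 := by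
  nlinarith [inner_le_of_mem_iceCreamCone hk y, snd_nonneg_of_mem_iceCreamCone hγ hk]

theorem sq_dist_eq_sq_dist_add_sq_dist_sub_inner (y : X) (s : ℝ) (q k : X × ℝ) :
    ‖y - k.1‖ ^ 2 + (s - k.2) ^ 2 =
      ‖y - q.1‖ ^ 2 + (s - q.2) ^ 2 + (‖k.1 - q.1‖ ^ 2 + (k.2 - q.2) ^ 2)
        - 2 * (⟪y - q.1, k.1 - q.1⟫ + (s - q.2) * (k.2 - q.2)) := by
  rw [← sub_sub_sub_cancel_right y k.1 q.1, norm_sub_sq_real]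
  ring

theorem eq_of_isMinOn_of_inner_le_zero {S : Set (X × ℝ)} {y : X} {s : ℝ} {p q : X × ℝ}
    (hpS : p ∈ S) (hp : IsMinOn (fun k : X × ℝ => ‖y - k.1‖ ^ 2 + (s - k.2) ^ 2) S p)
    (hqS : q ∈ S) (hq : ∀ k ∈ S, ⟪y - q.1, k.1 - q.1⟫ + (s - q.2) * (k.2 - q.2) ≤ 0) :
    p = q := by
  have hle := isMinOn_iff.mp hp q hqS
  rw [sq_dist_eq_sq_dist_add_sq_dist_sub_inner y s q p] at hle
  have hdist : ‖p.1 - q.1‖ ^ 2 + (p.2 - q.2) ^ 2 ≤ 0 := by linarith [hq p hpS]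
  have h1 : ‖p.1 - q.1‖ = 0 := by nlinarith [norm_nonneg (p.1 - q.1), sq_nonneg (p.2 - q.2)]
  have h2 : p.2 - q.2 = 0 := by nlinarith [sq_nonneg ‖p.1 - q.1‖]
  exact Prod.ext (sub_eq_zero.mp (norm_eq_zero.mp h1)) (sub_eq_zero.mp h2)

noncomputable def boundaryProj (γ : ℝ) (y : X) (s : ℝ) : X × ℝ :=
  ((s + γ * ‖y‖) / (1 + γ ^ 2)) • ((γ / ‖y‖) • y, (1 : ℝ))

theorem boundaryProj_mem_iceCreamCone {γ : ℝ} (hγ : 0 ≤ γ) {y : X} {s : ℝ}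
    (hsy : 0 ≤ s + γ * ‖y‖) : boundaryProj γ y s ∈ iceCreamCone γ := by
  have hα : 0 ≤ (s + γ * ‖y‖) / (1 + γ ^ 2) := by positivity
  rcases eq_or_ne y 0 with rfl | hy
  · simp only [iceCreamCone, mem_ofPred_eq, boundaryProj, Prod.smul_fst, Prod.smul_snd,
      smul_zero, norm_zero, smul_eq_mul, mul_one]
    simpa using mul_nonneg hγ hα
  · simp only [iceCreamCone, mem_ofPred_eq, boundaryProj, Prod.smul_fst, Prod.smul_snd,
      norm_smul, Real.norm_of_nonneg hα, Real.norm_of_nonneg (div_nonneg hγ (norm_nonneg y)),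
      smul_eq_mul, mul_one]
    rw [div_mul_cancel₀ _ (norm_ne_zero_iff.mpr hy), mul_comm]

theorem inner_sub_boundaryProj_nonpos {γ : ℝ} {y : X} {s : ℝ} (hy : y ≠ 0) (hys : γ * s ≤ ‖y‖)
    {k : X × ℝ} (hk : k ∈ iceCreamCone γ) :
    ⟪y - (boundaryProj γ y s).1, k.1 - (boundaryProj γ y s).1⟫
      + (s - (boundaryProj γ y s).2) * (k.2 - (boundaryProj γ y s).2) ≤ 0 := by
  have hν : 0 < ‖y‖ := norm_pos_iff.mpr hy
  set α := (s + γ * ‖y‖) / (1 + γ ^ 2) with hα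
  set c := (‖y‖ - γ * s) / ((1 + γ ^ 2) * ‖y‖) with hc
  have hc0 : 0 ≤ c := div_nonneg (by linarith) (by positivity)
  have hres : y - (α * (γ / ‖y‖)) • y = c • y := by
    have : 1 - α * (γ / ‖y‖) = c := by
      rw [hα, hc]
      field_simp
      ring
    rw [← this, sub_smul, one_smul]
  calc _ = c * (⟪y, k.1⟫ - γ * ‖y‖ * k.2) := by
        simp only [boundaryProj, Prod.smul_fst, Prod.smul_snd, smul_smul, smul_eq_mul, mul_one,
          ← hα, hres, inner_sub_right, real_inner_smul_left, real_inner_smul_right,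
          real_inner_self_eq_norm_sq]
        rw [hα, hc]
        field_simp
        ring
    _ ≤ 0 := mul_nonpos_of_nonneg_of_nonpos hc0 (by linarith [inner_le_of_mem_iceCreamCone hk y])

end Projection

theorem projection_onto_ice_cream_cone_general
    {X : Type*} [NormedAddCommGroup X] [InnerProductSpace ℝ X]
    (γ : ℝ) (hγ : 0 < γ) (y : X) (s : ℝ) (p : X × ℝ)
    (hpK : p ∈ closure (⋃ ρ ∈ Set.Ioi (0 : ℝ),
      ρ • (({x : X | ‖x‖ ≤ γ}) ×ˢ ({1} : Set ℝ))))
    (hmin : ∀ k ∈ closure (⋃ ρ ∈ Set.Ioi (0 : ℝ),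
        ρ • (({x : X | ‖x‖ ≤ γ}) ×ˢ ({1} : Set ℝ))),
      ‖y - p.1‖ ^ 2 + (s - p.2) ^ 2 ≤ ‖y - k.1‖ ^ 2 + (s - k.2) ^ 2) :
    (‖y‖ ≤ γ * s → p = (y, s)) ∧
      (γ * ‖y‖ ≤ -s → p = (0, 0)) ∧
      (¬ ‖y‖ ≤ γ * s → ¬ γ * ‖y‖ ≤ -s →
        p = ((s + γ * ‖y‖) / (1 + γ ^ 2)) • ((γ / ‖y‖) • y, (1 : ℝ))) := by
  rw [closure_iUnion_smul_prod_one hγ] at hpK hmin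
  have hp : IsMinOn (fun k : X × ℝ => ‖y - k.1‖ ^ 2 + (s - k.2) ^ 2) (iceCreamCone γ) p :=
    isMinOn_iff.mpr hmin
  refine ⟨fun hys => ?_, fun hsy => ?_, fun hys hsy => ?_⟩
  · exact eq_of_isMinOn_of_inner_le_zero hpK hp hys fun k _ => by simp
  · refine eq_of_isMinOn_of_inner_le_zero hpK hp (by simp [iceCreamCone]) fun k hk => ?_
    simpa using inner_add_mul_nonpos_of_mem_iceCreamCone hγ hsy hk
  · have hy : y ≠ 0 := by
      rintro rfl
      simp only [norm_zero, mul_zero, not_le] at hys hsy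
      nlinarith
    exact eq_of_isMinOn_of_inner_le_zero hpK hp
      (boundaryProj_mem_iceCreamCone hγ.le (by linarith)) fun k hk =>
        inner_sub_boundaryProj_nonpos hy (by linarith) hk

theorem projection_onto_ice_cream_cone
    {X : Type*} [NormedAddCommGroup X] [InnerProductSpace ℝ X] [CompleteSpace X]
    (γ : ℝ) (hγ : 0 < γ) (y : X) (s : ℝ) (p : X × ℝ)
    (hpK : p ∈ closure (⋃ ρ ∈ Set.Ioi (0 : ℝ),
      ρ • (({x : X | ‖x‖ ≤ γ}) ×ˢ ({1} : Set ℝ))))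
    (hmin : ∀ k ∈ closure (⋃ ρ ∈ Set.Ioi (0 : ℝ),
        ρ • (({x : X | ‖x‖ ≤ γ}) ×ˢ ({1} : Set ℝ))),
      ‖y - p.1‖ ^ 2 + (s - p.2) ^ 2 ≤ ‖y - k.1‖ ^ 2 + (s - k.2) ^ 2) :
    (‖y‖ ≤ γ * s → p = (y, s)) ∧
      (γ * ‖y‖ ≤ -s → p = (0, 0)) ∧
      (¬ ‖y‖ ≤ γ * s → ¬ γ * ‖y‖ ≤ -s →
        p = ((s + γ * ‖y‖) / (1 + γ ^ 2)) • ((γ / ‖y‖) • y, (1 : ℝ))) :=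
  projection_onto_ice_cream_cone_general γ hγ y s p hpK hmin
end

section
/- In ℝ², let R = ℝ₊·(0,1), C = B + R where B is the closed unit ball, and K = clcone(C × {1}) ⊆ ℝ³. Then the polar cone of K equals {(y₁,y₂,y₃) : y₂ ≤ 0, y₃ ≤ 0, and √(y₁² + y₂²) + y₃ ≤ 0}. -/
open scoped Pointwise RealInnerProductSpace

/-!
A continuous positively homogeneous functional is `≤ 0` on the closed cone generated by a set
iff it is `≤ 0` on the set itself, so `u` lies in the polar cone iff `⟪x, u.1⟫ + u.2 ≤ 0` for all
`x ∈ B + R`. The supremum of `⟪·, u.1⟫` over `B` is `‖u.1‖`, and over the ray `R` it is finite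
(namely `0`) iff `⟪(0, 1), u.1⟫ = u.1 1 ≤ 0`.
-/

open Set Metric

theorem forall_mem_closure_iUnion_smul_le_zero_iff {E : Type*} [TopologicalSpace E]
    [MulAction ℝ E] {f : E → ℝ} (hf : Continuous f)
    (hsmul : ∀ ρ : ℝ, 0 < ρ → ∀ x, f (ρ • x) = ρ * f x) (S : Set E) :
    (∀ k ∈ closure (⋃ ρ ∈ Ioi (0 : ℝ), ρ • S), f k ≤ 0) ↔ ∀ s ∈ S, f s ≤ 0 := by
  constructor
  · intro h s hs
    refine h s (subset_closure (mem_iUnion₂.2 ⟨1, mem_Ioi.2 one_pos, ?_⟩))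
    simpa using hs
  · intro h
    suffices ⋃ ρ ∈ Ioi (0 : ℝ), ρ • S ⊆ {k | f k ≤ 0} from
      fun k hk ↦ closure_minimal this (isClosed_le hf continuous_const) hk
    simp only [iUnion_subset_iff, mem_Ioi]
    rintro ρ hρ _ ⟨s, hs, rfl⟩
    simpa [mem_ofPred_eq, hsmul ρ hρ] using mul_nonpos_of_nonneg_of_nonpos hρ.le (h s hs)

section InnerProductSpace

variable {E : Type*} [NormedAddCommGroup E] [InnerProductSpace ℝ E]

theorem forall_mem_closedBall_inner_le_iff_s19 (w : E) (a : ℝ) :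
    (∀ b ∈ closedBall (0 : E) 1, ⟪b, w⟫ ≤ a) ↔ ‖w‖ ≤ a := by
  constructor
  · intro h
    have hunit : ‖w‖⁻¹ • w ∈ closedBall (0 : E) 1 := by
      rw [mem_closedBall_zero_iff, norm_smul, norm_inv, norm_norm]
      exact inv_mul_le_one_of_le₀ le_rfl (norm_nonneg w)
    -- `‖w‖⁻¹ * ‖w‖ ^ 2 = ‖w‖` holds also for `w = 0`
    simpa [real_inner_smul_left, real_inner_self_eq_norm_sq, sq, ← mul_assoc] using h _ hunit
  · intro h b hb
    calc ⟪b, w⟫ ≤ ‖b‖ * ‖w‖ := real_inner_le_norm b w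
      _ ≤ 1 * ‖w‖ := by gcongr; exact mem_closedBall_zero_iff.1 hb
      _ ≤ a := by rwa [one_mul]

theorem le_zero_of_forall_nonneg_mul_add_le_zero {p c : ℝ} (h : ∀ t : ℝ, 0 ≤ t → t * p + c ≤ 0) :
    p ≤ 0 := by
  by_contra! hp
  have := h ((1 - c) / p) (div_nonneg (by linarith [h 0 le_rfl]) hp.le)
  rw [div_mul_cancel₀ _ hp.ne'] at this
  linarith

theorem forall_mem_closedBall_add_ray_inner_add_le_zero_iff (v w : E) (c : ℝ) :
    (∀ x ∈ closedBall (0 : E) 1 + {x | ∃ t : ℝ, 0 ≤ t ∧ x = t • v}, ⟪x, w⟫ + c ≤ 0) ↔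
      ⟪v, w⟫ ≤ 0 ∧ ‖w‖ + c ≤ 0 := by
  simp only [mem_add, mem_ofPred_eq, forall_exists_index, and_imp]
  constructor
  · intro h
    refine ⟨le_zero_of_forall_nonneg_mul_add_le_zero (c := c) fun t ht ↦ ?_, ?_⟩
    · simpa [real_inner_smul_left] using h _ 0 (mem_closedBall_self zero_le_one) _ t ht rfl rfl
    · rw [← le_neg_iff_add_nonpos_right, ← forall_mem_closedBall_inner_le_iff_s19]
      intro b hb
      simpa [le_neg_iff_add_nonpos_right] using h _ b hb 0 0 le_rfl (zero_smul ℝ v).symm rfl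
  · rintro ⟨hv, hw⟩ _ b hb _ t ht rfl rfl
    have hball := (forall_mem_closedBall_inner_le_iff_s19 w ‖w‖).2 le_rfl b hb
    rw [inner_add_left, real_inner_smul_left]
    linarith [mul_nonpos_of_nonneg_of_nonpos ht hv]

end InnerProductSpace

theorem EuclideanSpace.norm_eq_sqrt_fin_two (u : EuclideanSpace ℝ (Fin 2)) :
    ‖u‖ = Real.sqrt ((u 0) ^ 2 + (u 1) ^ 2) := by
  simp [EuclideanSpace.norm_eq, Fin.sum_univ_two, Real.norm_eq_abs, sq_abs]

theorem EuclideanSpace.real_inner_zero_one_left (u : EuclideanSpace ℝ (Fin 2)) :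
    ⟪(!₂[0, 1] : EuclideanSpace ℝ (Fin 2)), u⟫ = u 1 := by
  simp [PiLp.inner_apply, Fin.sum_univ_two]

theorem polar_cone_of_ball_pen_cone :
    {u : EuclideanSpace ℝ (Fin 2) × ℝ |
        ∀ k ∈ closure (⋃ ρ ∈ Set.Ioi (0 : ℝ),
          ρ • ((Metric.closedBall (0 : EuclideanSpace ℝ (Fin 2)) 1 +
              {x : EuclideanSpace ℝ (Fin 2) |
                ∃ t : ℝ, 0 ≤ t ∧ x = t • (!₂[0, 1] : EuclideanSpace ℝ (Fin 2))}) ×ˢ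
            ({1} : Set ℝ))),
          ⟪k.1, u.1⟫ + k.2 * u.2 ≤ 0} =
      {u : EuclideanSpace ℝ (Fin 2) × ℝ |
        u.1 1 ≤ 0 ∧ u.2 ≤ 0 ∧ Real.sqrt ((u.1 0) ^ 2 + (u.1 1) ^ 2) + u.2 ≤ 0} := by
  ext u
  have hcont : Continuous fun k : EuclideanSpace ℝ (Fin 2) × ℝ ↦ ⟪k.1, u.1⟫ + k.2 * u.2 := by
    fun_prop
  have hsmul : ∀ ρ : ℝ, 0 < ρ → ∀ k : EuclideanSpace ℝ (Fin 2) × ℝ,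
      ⟪(ρ • k).1, u.1⟫ + (ρ • k).2 * u.2 = ρ * (⟪k.1, u.1⟫ + k.2 * u.2) := by
    intro ρ _ k
    simp only [Prod.smul_fst, Prod.smul_snd, real_inner_smul_left, smul_eq_mul]
    ring
  simp only [mem_ofPred_eq, forall_mem_closure_iUnion_smul_le_zero_iff hcont hsmul,
    forall_prod_set, mem_singleton_iff, forall_eq, one_mul,
    forall_mem_closedBall_add_ray_inner_add_le_zero_iff, EuclideanSpace.real_inner_zero_one_left,
    ← EuclideanSpace.norm_eq_sqrt_fin_two]
  have := norm_nonneg u.1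
  exact ⟨fun ⟨h1, h3⟩ ↦ ⟨h1, by linarith, h3⟩, fun ⟨h1, _, h3⟩ ↦ ⟨h1, h3⟩⟩
end
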